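/- With Π_N the fourth-order Taylor regularization of Π(s) = s·ln s at 1/N and π_N = Π_N', for any fixed u ∈ (0,1) there exist constants d₂ > 0 and d₃ ≥ 0 depending only on u such that for all sufficiently large N and all s ∈ ℝ, |π_N(s)| ≤ d₂·π_N(s)·(s − u) + d₃. -/

import Mathlib

/-- π_N = Π_N', the derivative of the fourth-order Taylor regularization of
Π(s) = s ln s at 1/N. -/
noncomputable def piN (N : ℕ) (s : ℝ) : ℝ :=
  if (1 : ℝ) / (N : ℝ) ≤ s then 1 + Real.log s
  else 1 + Real.log (1 / (N : ℝ))
    + (N : ℝ) * (s - 1 / (N : ℝ))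
    - ((N : ℝ)^2 / 2) * (s - 1 / (N : ℝ))^2
    + ((N : ℝ)^3 / 3) * (s - 1 / (N : ℝ))^3

/-! Where `π_N(s)` and `s - u` have the same sign and `|s - u| ≥ u/2`, the term
`(2/u)·π_N(s)·(s - u)` alone dominates `|π_N(s)|`. This fails only on a set of `s` contained in
an interval `[a, 2]` with `a > 0` independent of `N` (below `1/N` the polynomial branch is
nonpositive as soon as `N ≥ e`), and there `π_N(s) = 1 + ln s` is bounded by compactness. -/

open Real Set

theorem piN_of_le {N : ℕ} {s : ℝ} (hs : 1 / (N : ℝ) ≤ s) : piN N s = 1 + log s := by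
  rw [piN, if_pos hs]

theorem piN_nonpos_of_lt {N : ℕ} {s : ℝ} (hN : exp 1 ≤ N) (hs : s < 1 / (N : ℝ)) :
    piN N s ≤ 0 := by
  have hN0 : (0 : ℝ) < N := (exp_pos 1).trans_le hN
  have hlogN : 1 ≤ log N := by rwa [le_log_iff_exp_le hN0]
  rw [piN, if_neg hs.not_ge, one_div, log_inv]
  set t := s - (N : ℝ)⁻¹
  have ht : t < 0 := by simp only [t, ← one_div]; linarith
  have hlin : (N : ℝ) * t ≤ 0 := mul_nonpos_of_nonneg_of_nonpos hN0.le ht.le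
  have hquad : 0 ≤ ((N : ℝ) ^ 2 / 2) * t ^ 2 := by positivity
  have hcub : ((N : ℝ) ^ 3 / 3) * t ^ 3 ≤ 0 :=
    mul_nonpos_of_nonneg_of_nonpos (by positivity) (Odd.pow_nonpos (by decide) ht.le)
  linarith

theorem abs_le_inv_mul_mul_of_le_abs {p x c : ℝ} (hc : 0 < c) (hx : c ≤ |x|)
    (hpx : 0 ≤ p * x) : |p| ≤ c⁻¹ * (p * x) := by
  rw [← abs_of_nonneg hpx, abs_mul, le_inv_mul_iff₀ hc]
  exact mul_comm c |p| ▸ mul_le_mul_of_nonneg_left hx (abs_nonneg p)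

theorem abs_le_mul_mul_add_of_abs_le {p x M K d : ℝ} (hp : |p| ≤ M) (hx : |x| ≤ K)
    (hd : 0 ≤ d) : |p| ≤ d * (p * x) + (M + d * (M * K)) := by
  have hpx : -(M * K) ≤ p * x := by
    have hpxK : |p * x| ≤ M * K := by
      rw [abs_mul]
      exact mul_le_mul hp hx (abs_nonneg x) ((abs_nonneg p).trans hp)
    linarith [neg_abs_le (p * x)]
  nlinarith [mul_le_mul_of_nonneg_left hpx hd]

theorem le_abs_sub_and_piN_mul_sub_nonneg {N : ℕ} {u s : ℝ} (hu : u ∈ Ioo 0 1)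
    (hN : exp 1 ≤ N) (hNu : 1 / (N : ℝ) ≤ u / 2) (hs : s ∉ Icc (min (u / 2) (exp (-1))) 2) :
    u / 2 ≤ |s - u| ∧ 0 ≤ piN N s * (s - u) := by
  obtain ⟨hu0, hu1⟩ := hu
  rcases not_and_or.mp hs with hlow | hhigh
  · have hsu : s - u < -(u / 2) := by linarith [lt_min_iff.mp (not_le.mp hlow)]
    have hp : piN N s ≤ 0 := by
      rcases lt_or_ge s (1 / (N : ℝ)) with hsN | hsN
      · exact piN_nonpos_of_lt hN hsN
      · have hs0 : 0 < s := (one_div_pos.mpr ((exp_pos 1).trans_le hN)).trans_le hsN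
        have hlog : log s < -1 := by
          rw [← log_exp (-1)]
          exact log_lt_log hs0 (lt_min_iff.mp (not_le.mp hlow)).2
        rw [piN_of_le hsN]
        linarith
    exact ⟨by rw [abs_of_neg (by linarith)]; linarith,
      mul_nonneg_of_nonpos_of_nonpos hp (by linarith)⟩
  · have hs2 : 2 < s := not_le.mp hhigh
    have hp : 0 ≤ piN N s := by
      rw [piN_of_le (by linarith)]
      linarith [log_pos (by linarith : (1 : ℝ) < s)]
    exact ⟨by rw [abs_of_pos (by linarith)]; linarith, mul_nonneg hp (by linarith)⟩

/-- For any u ∈ (0,1) there are d₂ > 0, d₃ ≥ 0 depending only on u such that for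
all sufficiently large N and all s ∈ ℝ, |π_N(s)| ≤ d₂·π_N(s)·(s − u) + d₃. -/
theorem stmt_3 :
    ∀ u : ℝ, u ∈ Set.Ioo (0 : ℝ) 1 →
      ∃ d₂ : ℝ, 0 < d₂ ∧ ∃ d₃ : ℝ, 0 ≤ d₃ ∧ ∃ N₀ : ℕ,
        ∀ N : ℕ, N₀ ≤ N → ∀ s : ℝ,
          |piN N s| ≤ d₂ * (piN N s * (s - u)) + d₃ := by
  rintro u ⟨hu0, hu1⟩
  set a := min (u / 2) (exp (-1))
  have ha0 : 0 < a := lt_min (by positivity) (exp_pos _)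
  have hlog_cont : ContinuousOn (fun s => 1 + log s) (Icc a 2) :=
    continuousOn_const.add (continuousOn_log.mono fun s hs => (ha0.trans_le hs.1).ne')
  obtain ⟨M, hM⟩ := isCompact_Icc.exists_bound_of_continuousOn hlog_cont
  have hM0 : 0 ≤ M :=
    (norm_nonneg _).trans (hM 2 ⟨(min_le_left _ _).trans (by linarith), le_rfl⟩)
  refine ⟨2 / u, by positivity, M + 2 / u * (M * 2), by positivity, max 3 ⌈2 / u⌉₊,
    fun N hN s => ?_⟩
  have hNe : exp 1 ≤ N := by
    have hN3 : (3 : ℝ) ≤ N := by exact_mod_cast le_of_max_le_left hN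
    linarith [exp_one_lt_d9]
  have hNu : 1 / (N : ℝ) ≤ u / 2 := by
    rw [← one_div_div 2 u]
    exact one_div_le_one_div_of_le (by positivity) (Nat.ceil_le.mp (le_of_max_le_right hN))
  by_cases hs : s ∈ Icc a 2
  · have haN : 1 / (N : ℝ) ≤ a := by
      refine le_min hNu ?_
      rw [exp_neg, ← one_div]
      exact one_div_le_one_div_of_le (exp_pos 1) hNe
    have hp : |piN N s| ≤ M := by
      rw [piN_of_le (haN.trans hs.1)]
      exact hM s hs
    have hx : |s - u| ≤ 2 := abs_le.mpr ⟨by linarith [hs.1], by linarith [hs.2]⟩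
    exact abs_le_mul_mul_add_of_abs_le hp hx (by positivity)
  · obtain ⟨hx, hpx⟩ := le_abs_sub_and_piN_mul_sub_nonneg ⟨hu0, hu1⟩ hNe hNu hs
    have hgood := abs_le_inv_mul_mul_of_le_abs (by positivity) hx hpx
    rw [inv_div] at hgood
    linarith [show 0 ≤ M + 2 / u * (M * 2) by positivity]
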